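/- Suppose a well-ordered language L is a finite union L₁ ∪ ... ∪ Lₘ where each Lᵢ has order type at most ω^γ (γ > 0), each Lᵢ has supremum equal to a common word w, and none of the Lᵢ has a greatest element. Then o(L) = ω^γ provided at least one Lᵢ has order type exactly ω^γ. -/

import Mathlib

open Stream'

variable {α : Type*}

/-- Strict (non-prefix) lexicographic order on finite and ω-words. -/
def sLt [LT α] (u v : Seq α) : Prop :=
  ∃ n a b, (∀ i < n, u.get? i = v.get? i) ∧ u.get? n = some a ∧ v.get? n = some b ∧ a < b

/-- Proper prefix order on finite and ω-words. -/
def pLt (u v : Seq α) : Prop :=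
  u ≠ v ∧ ∀ i a, u.get? i = some a → v.get? i = some a

/-- The lexicographic order `<_ℓ` is the union of `<_s` and `<_p`. -/
def lexLt [LT α] (u v : Seq α) : Prop := sLt u v ∨ pLt u v

def lexLe [LT α] (u v : Seq α) : Prop := lexLt u v ∨ u = v

/-- `s` is the supremum of `S` in `(Σ^{≤ω}, <_ℓ)`. -/
def IsSupW [LT α] (S : Set (Seq α)) (s : Seq α) : Prop :=
  (∀ w ∈ S, lexLe w s) ∧ ∀ t, (∀ w ∈ S, lexLe w t) → lexLe s t

/-- A language is prefix-free: no word is a proper prefix of another. -/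
def PrefixFree (L : Set (List α)) : Prop := ∀ u ∈ L, ∀ v ∈ L, u <+: v → u = v

open Ordinal

/-- `≤` in the lexicographic order on finite words. -/
def listLe [LT α] (u v : List α) : Prop := List.Lex (· < ·) u v ∨ u = v

noncomputable def cnfSum (n : ℕ) (e : Fin n → Ordinal) (c : Fin n → ℕ) : Ordinal :=
  (List.ofFn fun i => omega0 ^ (e i) * (c i)).sum

/-!
Each `Lᵢ` is cofinal in `L`: an upper bound `v ∈ Lⱼ` of `Lᵢ` would satisfy `w ≤ v ≤ w`, so
`v = w` would be the greatest element of `Lⱼ`. Hence every initial segment `L^{<v}` is covered by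
finitely many initial segments `Lᵢ^{<uᵢ}` with `uᵢ ∈ Lᵢ`, each of order type `< ω^γ`. The order
type of a union of two subsets of a well-order is at most the natural (Hessenberg) sum `♯` of their
types, and `ω^γ` is closed under `♯`, so `o(L) ≤ ω^γ`. The `Lᵢ` of type `ω^γ` gives `o(L) ≥ ω^γ`.
-/

universe u

namespace Ordinal

noncomputable def nadd (a b : Ordinal.{u}) : Ordinal.{u} :=
  max (⨆ x : Set.Iio a, Order.succ (nadd x.1 b)) (⨆ x : Set.Iio b, Order.succ (nadd a x.1))
termination_by (a, b)
decreasing_by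
  · exact Prod.Lex.left _ _ x.2
  · exact Prod.Lex.right _ x.2

infixl:65 " ♯ " => nadd

theorem nadd_le_iff {a b c : Ordinal.{u}} :
    a ♯ b ≤ c ↔ (∀ a' < a, a' ♯ b < c) ∧ ∀ b' < b, a ♯ b' < c := by
  rw [nadd, max_le_iff, Ordinal.iSup_le_iff, Ordinal.iSup_le_iff]
  simp

theorem nadd_strictMono_left (a : Ordinal.{u}) : StrictMono (a ♯ ·) :=
  fun b' _ h => (nadd_le_iff.1 le_rfl).2 b' h

theorem nadd_strictMono_right (b : Ordinal.{u}) : StrictMono (· ♯ b) :=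
  fun a' _ h => (nadd_le_iff.1 le_rfl).1 a' h

theorem nadd_comm (a b : Ordinal.{u}) : a ♯ b = b ♯ a := by
  suffices h : ∀ a b : Ordinal.{u}, a ♯ b ≤ b ♯ a from (h a b).antisymm (h b a)
  intro a b
  induction a using WellFoundedLT.induction generalizing b with | _ a IHa =>
  induction b using WellFoundedLT.induction with | _ b IHb =>
  refine nadd_le_iff.2 ⟨fun a' ha' => ?_, fun b' hb' => ?_⟩
  · exact (IHa a' ha' b).trans_lt (nadd_strictMono_left b ha')
  · exact (IHb b' hb').trans_lt (nadd_strictMono_right a hb')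

theorem natCast_nadd_natCast_le (m n : ℕ) : (m : Ordinal) ♯ n ≤ (m + n : ℕ) := by
  induction m using Nat.strong_induction_on generalizing n with | _ m IHm =>
  induction n using Nat.strong_induction_on with | _ n IHn =>
  refine nadd_le_iff.2 ⟨fun a' ha' => ?_, fun b' hb' => ?_⟩
  · obtain ⟨m', rfl⟩ := lt_omega0.1 (ha'.trans (natCast_lt_omega0 m))
    have hm' : m' < m := by exact_mod_cast ha'
    exact (IHm m' hm' n).trans_lt (by exact_mod_cast (by omega : m' + n < m + n))
  · obtain ⟨n', rfl⟩ := lt_omega0.1 (hb'.trans (natCast_lt_omega0 n))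
    have hn' : n' < n := by exact_mod_cast hb'
    exact (IHn n' hn').trans_lt (by exact_mod_cast (by omega : m + n' < m + n))

theorem isPrincipal_nadd_omega0 : IsPrincipal (· ♯ ·) ω := by
  intro a b ha hb
  obtain ⟨m, rfl⟩ := lt_omega0.1 ha
  obtain ⟨n, rfl⟩ := lt_omega0.1 hb
  exact (natCast_nadd_natCast_le m n).trans_lt (natCast_lt_omega0 _)

theorem mul_div_nadd_add_mod_nadd_lt_left {p : Ordinal.{u}} (hp : IsPrincipal (· ♯ ·) p)
    (hp₀ : p ≠ 0) {x x' : Ordinal.{u}} (h : x' < x) (y : Ordinal.{u}) :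
    p * (x' / p ♯ y / p) + (x' % p ♯ y % p) < p * (x / p ♯ y / p) + (x % p ♯ y % p) := by
  rcases (div_le_left h.le p).lt_or_eq with hq | hq
  · calc p * (x' / p ♯ y / p) + (x' % p ♯ y % p)
        < p * (x' / p ♯ y / p) + p := add_lt_add_right (hp (mod_lt _ hp₀) (mod_lt _ hp₀)) _
      _ = p * Order.succ (x' / p ♯ y / p) := (mul_succ _ _).symm
      _ ≤ p * (x / p ♯ y / p) :=
          mul_le_mul_right (Order.succ_le_of_lt (nadd_strictMono_right _ hq)) _
      _ ≤ _ := le_self_add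
  · have hmod : x' % p < x % p := by
      rwa [← div_add_mod x' p, ← div_add_mod x p, hq, add_lt_add_iff_left] at h
    rw [hq]
    exact add_lt_add_right (nadd_strictMono_right _ hmod) _

theorem nadd_le_mul_div_nadd_add_mod_nadd {p : Ordinal.{u}} (hp : IsPrincipal (· ♯ ·) p)
    (hp₀ : p ≠ 0) (x y : Ordinal.{u}) :
    x ♯ y ≤ p * (x / p ♯ y / p) + (x % p ♯ y % p) := by
  induction x using WellFoundedLT.induction generalizing y with | _ x IHx =>
  induction y using WellFoundedLT.induction with | _ y IHy =>
  refine nadd_le_iff.2 ⟨fun x' hx' => ?_, fun y' hy' => ?_⟩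
  · exact (IHx x' hx' y).trans_lt (mul_div_nadd_add_mod_nadd_lt_left hp hp₀ hx' y)
  · refine (IHy y' hy').trans_lt ?_
    simpa only [nadd_comm] using mul_div_nadd_add_mod_nadd_lt_left hp hp₀ hy' x

theorem isPrincipal_nadd_omega0_opow (γ : Ordinal.{u}) : IsPrincipal (· ♯ ·) (ω ^ γ) := by
  induction γ using WellFoundedLT.induction with | _ γ IH =>
  rcases eq_or_ne γ 0 with rfl | hγ
  · rw [opow_zero, isPrincipal_one_iff]
    exact nonpos_iff_eq_zero.1 (nadd_le_iff.2 ⟨by simp, by simp⟩)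
  intro a b ha hb
  obtain ⟨δ, hδ, n, hn⟩ := (lt_omega0_opow hγ).1 (max_lt ha hb)
  have hp₀ : ω ^ δ ≠ 0 := opow_ne_zero _ omega0_ne_zero
  have hquot : a / ω ^ δ ♯ b / ω ^ δ < ω := by
    have hquot_lt {c : Ordinal} (hc : c ≤ max a b) : c / ω ^ δ < ω :=
      ((lt_mul_iff_div_lt hp₀).1 (hc.trans_lt hn)).trans (natCast_lt_omega0 n)
    exact isPrincipal_nadd_omega0 (hquot_lt (le_max_left a b)) (hquot_lt (le_max_right a b))
  calc a ♯ b ≤ ω ^ δ * (a / ω ^ δ ♯ b / ω ^ δ) + (a % ω ^ δ ♯ b % ω ^ δ) :=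
        nadd_le_mul_div_nadd_add_mod_nadd (IH δ hδ) hp₀ a b
    _ < ω ^ δ * (a / ω ^ δ ♯ b / ω ^ δ) + ω ^ δ :=
        add_lt_add_right (IH δ hδ (mod_lt _ hp₀) (mod_lt _ hp₀)) _
    _ = ω ^ δ * Order.succ (a / ω ^ δ ♯ b / ω ^ δ) := (mul_succ _ _).symm
    _ < ω ^ γ := opow_mul_lt_opow (isSuccLimit_omega0.succ_lt hquot) hδ

end Ordinal

section WellOrder

variable {β : Type*} (r : β → β → Prop) [IsWellOrder β r]

theorem type_le_of_forall_typein_lt {c : Ordinal} (h : ∀ x, typein r x < c) : type r ≤ c := by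
  by_contra! hc
  obtain ⟨x, hx⟩ := typein_surj r hc
  exact (h x).ne hx

theorem type_subrel_mono {A B : Set β} (h : A ⊆ B) :
    type (Subrel r (· ∈ A)) ≤ type (Subrel r (· ∈ B)) :=
  (Subrel.inclusionEmbedding r h).ordinal_type_le

theorem typein_subrel_eq_type_inter (S : Set β) {x : β} (hx : x ∈ S) :
    typein (Subrel r (· ∈ S)) ⟨x, hx⟩ = type (Subrel r (· ∈ S ∩ {y | r y x})) := by
  rw [← type_subrel]
  exact RelIso.ordinalType_congr ⟨Equiv.subtypeSubtypeEquivSubtypeInter _ (r · x), Iff.rfl⟩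

theorem type_union_le_nadd (A B : Set β) :
    type (Subrel r (· ∈ A ∪ B)) ≤ type (Subrel r (· ∈ A)) ♯ type (Subrel r (· ∈ B)) := by
  suffices ∀ o, ∀ A B : Set β, type (Subrel r (· ∈ A ∪ B)) = o →
      type (Subrel r (· ∈ A ∪ B)) ≤ type (Subrel r (· ∈ A)) ♯ type (Subrel r (· ∈ B)) from
    this _ A B rfl
  intro o
  induction o using WellFoundedLT.induction with | _ o IH =>
  rintro A B rfl
  refine type_le_of_forall_typein_lt _ fun ⟨x, hx⟩ => ?_
  have hsplit : (A ∪ B) ∩ {y | r y x} = A ∩ {y | r y x} ∪ B ∩ {y | r y x} :=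
    Set.union_inter_distrib_right A B _
  have hx_lt := typein_lt_type (Subrel r (· ∈ A ∪ B)) ⟨x, hx⟩
  rw [typein_subrel_eq_type_inter, hsplit] at hx_lt ⊢
  refine (IH _ hx_lt _ _ rfl).trans_lt ?_
  rcases hx with hxA | hxB
  · rw [← typein_subrel_eq_type_inter r A hxA]
    exact ((nadd_strictMono_left _).monotone (type_subrel_mono r Set.inter_subset_left)).trans_lt
      (nadd_strictMono_right _ (typein_lt_type _ _))
  · rw [← typein_subrel_eq_type_inter r B hxB]
    exact ((nadd_strictMono_right _).monotone (type_subrel_mono r Set.inter_subset_left)).trans_lt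
      (nadd_strictMono_left _ (typein_lt_type _ _))

theorem type_iUnion_lt {ι : Type*} [Finite ι] {c : Ordinal} (hc : IsPrincipal (· ♯ ·) c)
    (hc₀ : c ≠ 0) (S : ι → Set β) (hS : ∀ i, type (Subrel r (· ∈ S i)) < c) :
    type (Subrel r (· ∈ ⋃ i, S i)) < c := by
  classical
  have := Fintype.ofFinite ι
  suffices ∀ s : Finset ι, type (Subrel r (· ∈ ⋃ i ∈ s, S i)) < c by
    have := this Finset.univ
    rwa [show ⋃ i ∈ Finset.univ, S i = ⋃ i, S i by simp] at this
  intro s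
  induction s using Finset.induction_on with
  | empty =>
    rw [show ⋃ i ∈ (∅ : Finset ι), S i = ∅ by simp, type_eq_zero_of_empty]
    exact hc₀.bot_lt
  | insert i s _ IH =>
    rw [Finset.set_biUnion_insert]
    exact (type_union_le_nadd r _ _).trans_lt (hc (hS i) IH)

theorem type_le_of_cofinal_cover {ι : Type*} [Finite ι] {c : Ordinal}
    (hc : IsPrincipal (· ♯ ·) c) (hc₀ : c ≠ 0) (S : ι → Set β) (hcover : ∀ x, ∃ i, x ∈ S i)
    (hcofinal : ∀ i x, ∃ y ∈ S i, r x y) (hS : ∀ i, type (Subrel r (· ∈ S i)) ≤ c) :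
    type r ≤ c := by
  refine type_le_of_forall_typein_lt r fun x => ?_
  have hcover_x : {y | r y x} = ⋃ i, S i ∩ {y | r y x} := by
    rw [← Set.iUnion_inter, Set.iUnion_eq_univ_iff.2 hcover, Set.univ_inter]
  rw [← type_subrel, show (r · x) = (· ∈ {y | r y x}) from rfl, hcover_x]
  refine type_iUnion_lt r hc hc₀ _ fun i => ?_
  obtain ⟨y, hy, hxy⟩ := hcofinal i x
  calc type (Subrel r (· ∈ S i ∩ {z | r z x}))
      ≤ type (Subrel r (· ∈ S i ∩ {z | r z y})) :=
        type_subrel_mono r (Set.inter_subset_inter_right _ fun z hz => _root_.trans hz hxy)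
    _ = typein (Subrel r (· ∈ S i)) ⟨y, hy⟩ := (typein_subrel_eq_type_inter r _ hy).symm
    _ < type (Subrel r (· ∈ S i)) := typein_lt_type _ _
    _ ≤ c := hS i

end WellOrder

section LexOrder

theorem lexLt_asymm [Preorder α] {u v : Seq α} (huv : lexLt u v) (hvu : lexLt v u) : False := by
  have sLt_not_prefix : ∀ {s t : Seq α}, sLt s t →
      (∀ i a, s.get? i = some a → t.get? i = some a) ∨
        (∀ i a, t.get? i = some a → s.get? i = some a) → False := by
    rintro s t ⟨n, a, b, -, ha, hb, hab⟩ (h | h)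
    · cases (h n a ha).symm.trans hb
      exact lt_irrefl a hab
    · cases (h n b hb).symm.trans ha
      exact lt_irrefl a hab
  rcases huv with huv | ⟨hne, huv⟩ <;> rcases hvu with hvu | ⟨-, hvu⟩
  · obtain ⟨n, a, b, hn, ha, hb, hab⟩ := huv
    obtain ⟨n', b', a', hn', hb', ha', hab'⟩ := hvu
    rcases lt_trichotomy n n' with h | rfl | h
    · cases ha.symm.trans ((hn' n h).symm.trans hb)
      exact lt_irrefl a hab
    · cases ha.symm.trans ha'
      cases hb.symm.trans hb'
      exact lt_asymm hab hab'
    · cases hb'.symm.trans ((hn n' h).symm.trans ha')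
      exact lt_irrefl b' hab'
  · exact sLt_not_prefix huv (Or.inr hvu)
  · exact sLt_not_prefix hvu (Or.inr huv)
  · exact hne (Seq.ext fun i => Option.ext fun a => ⟨huv i a, hvu i a⟩)

theorem not_lexLt_of_lexLe [Preorder α] {u v : Seq α} (huv : lexLe u v) : ¬lexLt v u := by
  rcases huv with huv | rfl
  · exact lexLt_asymm huv
  · exact fun h => lexLt_asymm h h

theorem lexLe_antisymm [Preorder α] {u v : Seq α} (huv : lexLe u v) (hvu : lexLe v u) :
    u = v :=
  hvu.resolve_left (not_lexLt_of_lexLe huv) |>.symm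

theorem lexLt_ofList [LT α] {u v : List α} (h : u < v) :
    lexLt (Seq.ofList u) (Seq.ofList v) := by
  rcases List.lt_iff_exists.1 h with ⟨hpre, hlen⟩ | ⟨i, hu, hv, heq, hlt⟩
  · refine Or.inr ⟨fun he => hlen.ne (congrArg List.length (Seq.ofList_injective he)), ?_⟩
    intro i a ha
    rw [Seq.ofList_get?] at ha ⊢
    obtain ⟨hi, rfl⟩ := List.getElem?_eq_some_iff.1 ha
    exact List.prefix_iff_getElem?.1 (List.prefix_iff_eq_take.2 hpre) i hi
  · refine Or.inl ⟨i, u[i], v[i], fun j hj => ?_, by simp [Seq.ofList_get?],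
      by simp [Seq.ofList_get?], hlt⟩
    simp [Seq.ofList_get?, List.getElem?_eq_getElem (hj.trans hu),
      List.getElem?_eq_getElem (hj.trans hv), heq j hj]

theorem lexLe_ofList [LinearOrder α] {u v : List α} (h : u ≤ v) :
    lexLe (Seq.ofList u) (Seq.ofList v) := by
  rcases h.lt_or_eq with h | rfl
  · exact Or.inl (lexLt_ofList h)
  · exact Or.inr rfl

theorem exists_lt_of_isSupW [LinearOrder α] {S T : Set (List α)} {w : Seq α}
    (hS : IsSupW (Seq.ofList '' S) w) (hT : IsSupW (Seq.ofList '' T) w)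
    (hT_nomax : ¬∃ x ∈ T, ∀ v ∈ T, listLe v x) {v : List α} (hv : v ∈ T) :
    ∃ u ∈ S, v < u := by
  by_contra! hS_le
  have hw : w = Seq.ofList v := by
    refine lexLe_antisymm (hS.2 _ ?_) (hT.1 _ ⟨v, hv, rfl⟩)
    rintro _ ⟨u, hu, rfl⟩
    exact lexLe_ofList (hS_le u hu)
  obtain ⟨u, hu, hvu⟩ : ∃ u ∈ T, v < u := by
    by_contra! hT_le
    exact hT_nomax ⟨v, hv, fun u hu => (hT_le u hu).lt_or_eq⟩
  exact not_lexLt_of_lexLe (hw ▸ hT.1 _ ⟨u, hu, rfl⟩) (lexLt_ofList hvu)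

end LexOrder

theorem type_subrel_setOf_val_mem {X : Type*} (r : X → X → Prop) {L A : Set X}
    [IsWellOrder {x // x ∈ L} (Subrel r (· ∈ L))] [IsWellOrder {x // x ∈ A} (Subrel r (· ∈ A))]
    (hA : A ⊆ L) :
    type (Subrel (Subrel r (· ∈ L)) (· ∈ {x : L | x.1 ∈ A})) = type (Subrel r (· ∈ A)) :=
  RelIso.ordinalType_congr ⟨Equiv.subtypeSubtypeEquivSubtype fun hx => hA hx, Iff.rfl⟩

theorem type_of_union_pow_general [LinearOrder α] (m : ℕ) (Ls : Fin m → Set (List α))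
    (L : Set (List α)) (hL : L = ⋃ i, Ls i) (γ : Ordinal)
    (hw : IsWellOrder L (Subrel (List.Lex (· < ·)) L))
    (hwi : ∀ i, IsWellOrder (Ls i) (Subrel (List.Lex (· < ·)) (Ls i)))
    (hle : ∀ i, @Ordinal.type _ _ (hwi i) ≤ omega0 ^ γ)
    (w : Seq α) (hsup : ∀ i, IsSupW (Seq.ofList '' Ls i) w)
    (hnomax : ∀ i, ¬ ∃ x ∈ Ls i, ∀ v ∈ Ls i, listLe v x)
    (hone : ∃ i, @Ordinal.type _ _ (hwi i) = omega0 ^ γ) :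
    @Ordinal.type _ _ hw = omega0 ^ γ := by
  -- `hw` in the form `Subrel r (· ∈ L)` for which Mathlib's `Subrel` instances are stated
  have hwL : IsWellOrder {x // x ∈ L} (Subrel (List.Lex (· < ·)) (· ∈ L)) := hw
  have hsub : ∀ i, Ls i ⊆ L := hL ▸ Set.subset_iUnion Ls
  have htype : ∀ i,
      type (Subrel (Subrel (List.Lex (· < ·)) (· ∈ L)) (· ∈ {x : L | x.1 ∈ Ls i})) =
        @type _ _ (hwi i) := fun i => @type_subrel_setOf_val_mem _ _ _ _ hwL (hwi i) (hsub i)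
  obtain ⟨i₀, hi₀⟩ := hone
  refine le_antisymm (type_le_of_cofinal_cover _ (isPrincipal_nadd_omega0_opow γ)
    (opow_ne_zero _ omega0_ne_zero) (fun i => {x : L | x.1 ∈ Ls i}) ?_ ?_
    fun i => (htype i).trans_le (hle i)) ?_
  · rintro ⟨x, hx⟩
    simpa [hL] using hx
  · rintro i ⟨v, hv⟩
    obtain ⟨j, hvj⟩ := Set.mem_iUnion.1 (hL ▸ hv)
    obtain ⟨u, hu, hvu⟩ := exists_lt_of_isSupW (hsup i) (hsup j) (hnomax j) hvj
    exact ⟨⟨u, hsub i hu⟩, hu, hvu⟩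
  · rw [← hi₀, ← htype i₀]
    exact (Subrel.relEmbedding _ _).ordinal_type_le

theorem type_of_union_pow [LinearOrder α] (m : ℕ) (Ls : Fin m → Set (List α))
    (L : Set (List α)) (hL : L = ⋃ i, Ls i) (γ : Ordinal) (hγ : 0 < γ)
    (hw : IsWellOrder L (Subrel (List.Lex (· < ·)) L))
    (hwi : ∀ i, IsWellOrder (Ls i) (Subrel (List.Lex (· < ·)) (Ls i)))
    (hle : ∀ i, @Ordinal.type _ _ (hwi i) ≤ omega0 ^ γ)
    (w : Seq α) (hsup : ∀ i, IsSupW (Seq.ofList '' Ls i) w)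
    (hnomax : ∀ i, ¬ ∃ x ∈ Ls i, ∀ v ∈ Ls i, listLe v x)
    (hone : ∃ i, @Ordinal.type _ _ (hwi i) = omega0 ^ γ) :
    @Ordinal.type _ _ hw = omega0 ^ γ :=
  type_of_union_pow_general m Ls L hL γ hw hwi hle w hsup hnomax hone
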